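/- (Prediction rule.) Let n ≥ k+1 and assume P(X_n ∈ R_j^k) > 0. Setting q_i = P(X_n = i | X_n ∈ R_j^k), one has P(X_{n+1} ∈ R_j^k | X_n ∈ R_j^k) = Σ_{i=1}^∞ q_i · [ (j/k) p_i + Σ_{m > i} p_m (S_m/S_i)^j ((k-j)/k) + Σ_{m < i} p_m (C_{m-1}/C_{i-1})^{k-j} (j/k) ]. -/

import Mathlib

/-!
Write the current window as `insert a V` and the next one as `insert n V`, where `a = n - k` is
the index that leaves the window. Fix `X n = i` and `X (n + 1) = m`. If `m ≤ i`, both `X n` and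
`X (n + 1)` are `j`-recent records exactly when `X a ≥ i`, exactly `j - 1` of the `X t` with
`t ∈ V` are `≥ i`, and all the others are `< m`; if `i < m`, exactly when `X a < i`, exactly `j`
of the `X t` with `t ∈ V` are `≥ m`, and all the others are `< i`. By independence, the event that
some coordinates take prescribed values and that, of the `k - 1` coordinates in `V`, exactly `r`
lie in `A` and the others in a disjoint `D`, has probability `C(k - 1, r) P(A)^r P(D)^(k - 1 - r)`
times the probabilities of the prescribed values. The identities
`C(k - 1, j - 1) = (j / k) C(k, j)` and `C(k - 1, j) = ((k - j) / k) C(k, j)` turn this into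
`P(X n ∈ R_j^k, X n = i) = C(k, j) p_i S_i^j C_{i-1}^{k-j}` times the `m`-th term of the bracket.
Summing over `m` and then over `i` gives the rule.
-/

open MeasureTheory ProbabilityTheory Finset

lemma prod_ite_mem_of_subset {ι M : Type*} [DecidableEq ι] [CommMonoid M] {V T : Finset ι}
    (hTV : T ⊆ V) (a b : M) :
    ∏ t ∈ V, (if t ∈ T then a else b) = a ^ #T * b ^ (#V - #T) := by
  rw [prod_ite, prod_const, prod_const, filter_mem_eq_inter, inter_eq_right.2 hTV, filter_not,
    filter_mem_eq_inter, inter_eq_right.2 hTV, card_sdiff_of_subset hTV]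

lemma card_filter_eq_card_filter_iff {α : Type*} {s : Finset α} {p q : α → Prop}
    [DecidablePred p] [DecidablePred q] (h : ∀ x ∈ s, p x → q x) :
    #(s.filter p) = #(s.filter q) ↔ ∀ x ∈ s, q x → p x := by
  constructor
  · intro hcard x hx hqx
    have heq := eq_of_subset_of_card_le (monotone_filter_right s h) hcard.ge
    exact (mem_filter.1 (heq ▸ mem_filter.2 ⟨hx, hqx⟩ : x ∈ s.filter p)).2
  · intro h'
    rw [filter_congr fun x hx => ⟨h x hx, h' x hx⟩]

lemma card_filter_insert_of_notMem {α : Type*} [DecidableEq α] {s : Finset α} {a : α}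
    (ha : a ∉ s) (p : α → Prop) [DecidablePred p] :
    #((insert a s).filter p) = #(s.filter p) + if p a then 1 else 0 := by
  rw [filter_insert]
  split_ifs
  · rw [card_insert_of_notMem fun h => ha (mem_filter.1 h).1]
  · rfl

lemma filter_mem_eq_and_forall_mem_union_iff {ι β : Type*} [DecidableEq ι] {V T : Finset ι}
    (hTV : T ⊆ V) {A D : Set β} [DecidablePred (· ∈ A)] (hAD : Disjoint A D) (x : ι → β) :
    (V.filter (fun t => x t ∈ A) = T ∧ ∀ t ∈ V, x t ∈ A ∪ D) ↔
      ∀ t ∈ V, x t ∈ if t ∈ T then A else D := by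
  constructor
  · rintro ⟨rfl, hAD'⟩ t ht
    by_cases hxt : x t ∈ A
    · simp [ht, hxt]
    · simpa [hxt] using hAD' t ht
  · intro h
    refine ⟨?_, fun t ht => ?_⟩
    · ext t
      by_cases htT : t ∈ T
      · simpa [htT, hTV htT] using h t (hTV htT)
      · simp only [mem_filter, htT, iff_false, not_and]
        intro ht
        simpa [htT] using hAD.notMem_of_mem_right (by simpa [htT] using h t ht)
    · have := h t ht
      split_ifs at this <;> simp [this]

lemma cast_choose_eq_div_mul_choose_add_one (n j : ℕ) :
    (n.choose j : ℝ) = (j + 1) / (n + 1) * (n + 1).choose (j + 1) := by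
  have h : ((n + 1 : ℕ) : ℝ) * n.choose j = (n + 1).choose (j + 1) * (j + 1 : ℕ) := by
    exact_mod_cast Nat.add_one_mul_choose_eq n j
  push_cast at h
  field_simp
  linarith

lemma cast_choose_mul_pow_mul_self (n j : ℕ) (x : ℝ) :
    (n.choose j : ℝ) * x ^ (n - j) * x =
      ((n + 1 : ℝ) - j) / (n + 1) * (n + 1).choose j * x ^ (n + 1 - j) := by
  rcases le_or_gt j n with hjn | hnj
  · have h : (n.choose j : ℝ) * (n + 1 : ℕ) = (n + 1).choose j * (n + 1 - j : ℕ) := by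
      exact_mod_cast Nat.choose_mul_succ_eq n j
    rw [Nat.cast_sub (by omega)] at h
    push_cast at h
    rw [mul_assoc, ← pow_succ, show n - j + 1 = n + 1 - j by omega]
    field_simp
    linear_combination x ^ (n + 1 - j) * h
  · rw [Nat.choose_eq_zero_of_lt hnj]
    rcases (Nat.succ_le_of_lt hnj).eq_or_lt with rfl | hlt
    · simp
    · simp [Nat.choose_eq_zero_of_lt hlt]

lemma pow_mul_div_pow_of_le {a b : ℝ} (ha : 0 ≤ a) (hab : a ≤ b) (e : ℕ) :
    b ^ e * (a / b) ^ e = a ^ e := by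
  rw [← mul_pow, mul_div_cancel_of_imp' fun hb => le_antisymm (hb ▸ hab) ha]

lemma hasSum_measureReal_inter_preimage_singleton {Ω : Type*} [MeasurableSpace Ω]
    {μ : Measure Ω} [IsFiniteMeasure μ] {Y : Ω → ℕ} (hY : Measurable Y) {s : Set Ω}
    (hs : MeasurableSet s) : HasSum (fun i => μ.real (s ∩ Y ⁻¹' {i})) (μ.real s) := by
  have hdisj : Pairwise (Function.onFun Disjoint fun i : ℕ => s ∩ Y ⁻¹' {i}) := fun i i' h =>
    ((Set.disjoint_singleton.2 h).preimage Y).mono inf_le_right inf_le_right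
  have hunion : ⋃ i, s ∩ Y ⁻¹' {i} = s := by ext ω; simp
  have hsum := measure_iUnion (μ := μ) hdisj fun i => hs.inter (hY (measurableSet_singleton i))
  rw [hunion] at hsum
  have hfin : ∑' i, μ (s ∩ Y ⁻¹' {i}) ≠ ⊤ := hsum ▸ measure_ne_top μ s
  rw [measureReal_def, hsum, ENNReal.tsum_toReal_eq (ENNReal.ne_top_of_tsum_ne_top hfin)]
  exact ENNReal.hasSum_toReal hfin

lemma toReal_cond_apply {Ω : Type*} [MeasurableSpace Ω] {μ : Measure Ω} {s : Set Ω}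
    (hs : MeasurableSet s) (t : Set Ω) :
    (μ[|s] t).toReal = (μ.real s)⁻¹ * μ.real (s ∩ t) := by
  rw [cond_apply hs, ENNReal.toReal_mul, ENNReal.toReal_inv]
  rfl

lemma antitone_measureReal_preimage_Ici {Ω : Type*} [MeasurableSpace Ω] (μ : Measure Ω)
    [IsFiniteMeasure μ] (Y : Ω → ℕ) : Antitone fun i => μ.real (Y ⁻¹' Set.Ici i) :=
  fun _ _ h => measureReal_mono (Set.preimage_mono (Set.Ici_subset_Ici.2 h))

lemma monotone_measureReal_preimage_Iio {Ω : Type*} [MeasurableSpace Ω] (μ : Measure Ω)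
    [IsFiniteMeasure μ] (Y : Ω → ℕ) : Monotone fun i => μ.real (Y ⁻¹' Set.Iio i) :=
  fun _ _ h => measureReal_mono (Set.preimage_mono (Set.Iio_subset_Iio h))

lemma setOf_forall_mem_and_filter_eq {Ω ι β : Type*} [DecidableEq ι] (X : ι → Ω → β)
    {F V T : Finset ι} (hFV : Disjoint F V) (hTV : T ⊆ V) (E : ι → Set β) {A D : Set β}
    [DecidablePred (· ∈ A)] (hAD : Disjoint A D) :
    {ω | (∀ s ∈ F, X s ω ∈ E s) ∧ V.filter (fun t => X t ω ∈ A) = T ∧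
        ∀ t ∈ V, X t ω ∈ A ∪ D} =
      ⋂ t ∈ F ∪ V, X t ⁻¹' (if t ∈ F then E t else if t ∈ T then A else D) := by
  ext ω
  simp only [Set.mem_ofPred_eq, filter_mem_eq_and_forall_mem_union_iff hTV hAD,
    Set.mem_iInter, Set.mem_preimage, forall_mem_union]
  refine and_congr (forall₂_congr fun s hs => by rw [if_pos hs]) (forall₂_congr fun t ht => ?_)
  rw [if_neg (disjoint_right.1 hFV ht)]

/-- The event `{X b ∈ R_j}` for the window `W` of indices preceding `b`. -/
def recentRecordEvent {Ω : Type*} (X : ℕ → Ω → ℕ) (W : Finset ℕ) (b j : ℕ) : Set Ω :=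
  {ω | #(W.filter fun t => X b ω ≤ X t ω) = j}

section WindowShift

variable {V : Finset ℕ} {a b i m j : ℕ} {x : ℕ → ℕ}

lemma window_shift_iff_of_le (ha : a ∉ V) (hb : b ∉ V) (hxb : x b = i) (hmi : m ≤ i) :
    (#((insert a V).filter fun t => i ≤ x t) = j ∧
        #((insert b V).filter fun t => m ≤ x t) = j) ↔
      x a ∈ Set.Ici i ∧ #(V.filter fun t => x t ∈ Set.Ici i) + 1 = j ∧
        ∀ t ∈ V, x t ∈ Set.Ici i ∪ Set.Iio m := by
  have hsub : ∀ t ∈ V, i ≤ x t → m ≤ x t := fun t _ h => hmi.trans h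
  have hle := card_le_card (monotone_filter_right V hsub)
  have hiff : (∀ t ∈ V, i ≤ x t ∨ x t < m) ↔ ∀ t ∈ V, m ≤ x t → i ≤ x t :=
    forall₂_congr fun t _ => by omega
  simp only [Set.mem_Ici, Set.mem_union, Set.mem_Iio]
  rw [card_filter_insert_of_notMem ha, card_filter_insert_of_notMem hb,
    if_pos (show m ≤ x b by omega), hiff, ← card_filter_eq_card_filter_iff hsub]
  split_ifs <;> omega

lemma window_shift_iff_of_lt (ha : a ∉ V) (hb : b ∉ V) (hxb : x b = i) (him : i < m) :
    (#((insert a V).filter fun t => i ≤ x t) = j ∧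
        #((insert b V).filter fun t => m ≤ x t) = j) ↔
      x a ∈ Set.Iio i ∧ #(V.filter fun t => x t ∈ Set.Ici m) = j ∧
        ∀ t ∈ V, x t ∈ Set.Ici m ∪ Set.Iio i := by
  have hsub : ∀ t ∈ V, m ≤ x t → i ≤ x t := fun t _ h => him.le.trans h
  have hle := card_le_card (monotone_filter_right V hsub)
  have hiff : (∀ t ∈ V, m ≤ x t ∨ x t < i) ↔ ∀ t ∈ V, i ≤ x t → m ≤ x t :=
    forall₂_congr fun t _ => by omega
  simp only [Set.mem_Ici, Set.mem_union, Set.mem_Iio]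
  rw [card_filter_insert_of_notMem ha, card_filter_insert_of_notMem hb,
    if_neg (show ¬m ≤ x b by omega), hiff, ← card_filter_eq_card_filter_iff hsub]
  split_ifs <;> omega

end WindowShift

/-- The `m`-th term of the bracket in the prediction rule, as a series in the value `m` of
`X (n + 1)`. -/
noncomputable def transitionWeight (p S C : ℕ → ℝ) (k j i m : ℕ) : ℝ :=
  (if m = i then j / k * p i else 0) +
    (if i < m then p m * (S m / S i) ^ j * ((k - j) / k) else 0) +
    if m ∈ Ico 1 i then p m * (C (m - 1) / C (i - 1)) ^ (k - j) * (j / k) else 0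

lemma hasSum_transitionWeight (p S C : ℕ → ℝ) (k j i : ℕ)
    (hsum : Summable fun m => if i < m then p m * (S m / S i) ^ j * ((k - j) / k) else 0) :
    HasSum (transitionWeight p S C k j i) (j / k * p i +
      (∑' m, if i < m then p m * (S m / S i) ^ j * ((k - j) / k) else 0) +
      ∑ m ∈ Ico 1 i, p m * (C (m - 1) / C (i - 1)) ^ (k - j) * (j / k)) := by
  refine ((hasSum_ite_eq i _).add hsum.hasSum).add ?_
  rw [← sum_congr rfl fun m hm => if_pos hm]
  exact hasSum_sum_of_ne_finset_zero fun m hm => if_neg hm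

lemma summable_ite_lt_mul_div_pow {p S : ℕ → ℝ} (hp : Summable p) (hp0 : ∀ m, 0 ≤ p m)
    (hS0 : ∀ m, 0 ≤ S m) (hS : Antitone S) (i j : ℕ) (c : ℝ) :
    Summable fun m => if i < m then p m * (S m / S i) ^ j * c else 0 := by
  refine (hp.mul_right |c|).of_norm_bounded fun m => ?_
  split_ifs with him
  · have hratio : 0 ≤ S m / S i := div_nonneg (hS0 m) (hS0 i)
    rw [Real.norm_eq_abs, abs_mul, abs_mul, abs_of_nonneg (hp0 m),
      abs_of_nonneg (pow_nonneg hratio j)]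
    exact mul_le_mul_of_nonneg_right (mul_le_of_le_one_right (hp0 m)
      (pow_le_one₀ hratio (div_le_one_of_le₀ (hS him.le) (hS0 i)))) (abs_nonneg c)
  · simpa using mul_nonneg (hp0 m) (abs_nonneg c)

section IID

variable {Ω : Type*} [MeasurableSpace Ω] {P : Measure Ω} {X : ℕ → Ω → ℕ}

lemma measureReal_biInter_preimage_eq_prod (hindep : iIndepFun X P)
    (hident : ∀ a, IdentDistrib (X a) (X 1) P P) (S : Finset ℕ) (A : ℕ → Set ℕ) :
    P.real (⋂ t ∈ S, X t ⁻¹' A t) = ∏ t ∈ S, P.real (X 1 ⁻¹' A t) := by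
  rw [measureReal_def, hindep.measure_inter_preimage_eq_mul S fun _ _ => .of_discrete,
    ENNReal.toReal_prod]
  exact prod_congr rfl fun t _ => by rw [(hident t).measure_mem_eq .of_discrete]; rfl

lemma measureReal_forall_mem_and_card_filter_eq [IsFiniteMeasure P]
    (hX : ∀ a, Measurable (X a)) (hindep : iIndepFun X P)
    (hident : ∀ a, IdentDistrib (X a) (X 1) P P) {F V : Finset ℕ} (hFV : Disjoint F V)
    (E : ℕ → Set ℕ) {A D : Set ℕ} [DecidablePred (· ∈ A)] (hAD : Disjoint A D) (r : ℕ) :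
    P.real {ω | (∀ s ∈ F, X s ω ∈ E s) ∧ #(V.filter fun t => X t ω ∈ A) = r ∧
        ∀ t ∈ V, X t ω ∈ A ∪ D} =
      (∏ s ∈ F, P.real (X 1 ⁻¹' E s)) * (#V).choose r * P.real (X 1 ⁻¹' A) ^ r *
        P.real (X 1 ⁻¹' D) ^ (#V - r) := by
  set piece : Finset ℕ → Set Ω := fun T =>
    {ω | (∀ s ∈ F, X s ω ∈ E s) ∧ V.filter (fun t => X t ω ∈ A) = T ∧ ∀ t ∈ V, X t ω ∈ A ∪ D}
  have hunion : {ω | (∀ s ∈ F, X s ω ∈ E s) ∧ #(V.filter fun t => X t ω ∈ A) = r ∧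
      ∀ t ∈ V, X t ω ∈ A ∪ D} = ⋃ T ∈ V.powersetCard r, piece T := by
    ext ω
    simp only [piece, Set.mem_ofPred_eq, Set.mem_iUnion, mem_powersetCard, exists_prop]
    constructor
    · rintro ⟨hF, hr, hV⟩
      exact ⟨_, ⟨filter_subset _ _, hr⟩, hF, rfl, hV⟩
    · rintro ⟨T, ⟨-, rfl⟩, hF, rfl, hV⟩
      exact ⟨hF, rfl, hV⟩
  have hdisj : Set.PairwiseDisjoint (V.powersetCard r : Set (Finset ℕ)) piece :=
    fun T _ T' _ hTT' => Set.disjoint_left.2 fun ω hT hT' => hTT' (hT.2.1.symm.trans hT'.2.1)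
  have hpiece : ∀ T ∈ V.powersetCard r, piece T =
      ⋂ t ∈ F ∪ V, X t ⁻¹' (if t ∈ F then E t else if t ∈ T then A else D) := fun T hT =>
    setOf_forall_mem_and_filter_eq X hFV (mem_powersetCard.1 hT).1 E hAD
  have hmeas : ∀ T ∈ V.powersetCard r, MeasurableSet (piece T) := fun T hT => by
    rw [hpiece T hT]
    exact Finset.measurableSet_biInter _ fun t _ => hX t .of_discrete
  have hprob : ∀ T ∈ V.powersetCard r, P.real (piece T) = (∏ s ∈ F, P.real (X 1 ⁻¹' E s)) *
      (P.real (X 1 ⁻¹' A) ^ r * P.real (X 1 ⁻¹' D) ^ (#V - r)) := by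
    intro T hT
    obtain ⟨hTV, rfl⟩ := mem_powersetCard.1 hT
    rw [hpiece T hT, measureReal_biInter_preimage_eq_prod hindep hident, prod_union hFV,
      ← prod_ite_mem_of_subset hTV]
    congr 1
    · exact prod_congr rfl fun s hs => by rw [if_pos hs]
    · exact prod_congr rfl fun t ht => by
        rw [if_neg (disjoint_right.1 hFV ht), apply_ite (fun B => P.real (X 1 ⁻¹' B))]
  rw [hunion, measureReal_biUnion_finset hdisj hmeas, sum_eq_card_nsmul hprob,
    card_powersetCard, nsmul_eq_mul]
  ring

lemma measurableSet_recentRecordEvent (hX : ∀ a, Measurable (X a)) (W : Finset ℕ) (b j : ℕ) :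
    MeasurableSet (recentRecordEvent X W b j) := by
  have : Measurable fun ω => #(W.filter fun t => X b ω ≤ X t ω) := by
    simp_rw [card_filter]
    exact Finset.measurable_sum _ fun t _ =>
      Measurable.ite (measurableSet_le (hX b) (hX t)) measurable_const measurable_const
  exact this (measurableSet_singleton j)

variable {V : Finset ℕ} {a b c : ℕ}

lemma measureReal_recentRecordEvent_inter_preimage [IsFiniteMeasure P]
    (hX : ∀ a, Measurable (X a)) (hindep : iIndepFun X P)
    (hident : ∀ a, IdentDistrib (X a) (X 1) P P) (ha : a ∉ V) (hb : b ∉ V) (hab : a ≠ b)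
    (j i : ℕ) :
    P.real (recentRecordEvent X (insert a V) b j ∩ X b ⁻¹' {i}) =
      (#V + 1).choose j * (P.real (X 1 ⁻¹' {i}) * P.real (X 1 ⁻¹' Set.Ici i) ^ j *
        P.real (X 1 ⁻¹' Set.Iio i) ^ (#V + 1 - j)) := by
  have hset : recentRecordEvent X (insert a V) b j ∩ X b ⁻¹' {i} =
      {ω | (∀ s ∈ ({b} : Finset ℕ), X s ω ∈ ({i} : Set ℕ)) ∧
        #((insert a V).filter fun t => X t ω ∈ Set.Ici i) = j ∧
        ∀ t ∈ insert a V, X t ω ∈ Set.Ici i ∪ Set.Iio i} := by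
    ext ω
    simp only [recentRecordEvent, Set.mem_inter_iff, Set.mem_ofPred_eq, Set.mem_preimage,
      Set.mem_singleton_iff, Finset.mem_singleton, forall_eq, Set.mem_Ici, Set.mem_union,
      Set.mem_Iio]
    constructor
    · rintro ⟨hj, rfl⟩
      exact ⟨rfl, hj, fun t _ => le_or_gt _ _⟩
    · rintro ⟨rfl, hj, -⟩
      exact ⟨hj, rfl⟩
  rw [hset, measureReal_forall_mem_and_card_filter_eq hX hindep hident (by simp [hab.symm, hb]) _
    (Set.Ici_disjoint_Iio le_rfl), prod_singleton, card_insert_of_notMem ha]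
  ring

lemma measureReal_recentRecordEvent_shift_of_le [IsFiniteMeasure P]
    (hX : ∀ a, Measurable (X a)) (hindep : iIndepFun X P)
    (hident : ∀ a, IdentDistrib (X a) (X 1) P P) (ha : a ∉ V) (hb : b ∉ V) (hc : c ∉ V)
    (hab : a ≠ b) (hac : a ≠ c) (hbc : b ≠ c) (j : ℕ) {i m : ℕ} (hmi : m ≤ i) :
    P.real (recentRecordEvent X (insert a V) b j ∩ recentRecordEvent X (insert b V) c j ∩
        X b ⁻¹' {i} ∩ X c ⁻¹' {m}) =
      j / (#V + 1) * (#V + 1).choose j * (P.real (X 1 ⁻¹' {i}) * P.real (X 1 ⁻¹' {m}) *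
        P.real (X 1 ⁻¹' Set.Ici i) ^ j * P.real (X 1 ⁻¹' Set.Iio m) ^ (#V + 1 - j)) := by
  set E : ℕ → Set ℕ := fun s => if s = b then {i} else if s = c then {m} else Set.Ici i
  have hset : recentRecordEvent X (insert a V) b j ∩ recentRecordEvent X (insert b V) c j ∩
      X b ⁻¹' {i} ∩ X c ⁻¹' {m} =
      {ω | (∀ s ∈ ({b, c, a} : Finset ℕ), X s ω ∈ E s) ∧
        #(V.filter fun t => X t ω ∈ Set.Ici i) + 1 = j ∧
        ∀ t ∈ V, X t ω ∈ Set.Ici i ∪ Set.Iio m} := by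
    ext ω
    simp only [recentRecordEvent, E, Set.mem_inter_iff, Set.mem_ofPred_eq, Set.mem_preimage,
      Set.mem_singleton_iff, forall_mem_insert, Finset.mem_singleton, forall_eq, hbc.symm, hab,
      hac, reduceIte]
    constructor
    · rintro ⟨⟨⟨hcur, hnext⟩, rfl⟩, rfl⟩
      obtain ⟨h1, h2, h3⟩ :=
        (window_shift_iff_of_le (x := fun t => X t ω) ha hb rfl hmi).1 ⟨hcur, hnext⟩
      exact ⟨⟨rfl, rfl, h1⟩, h2, h3⟩
    · rintro ⟨⟨rfl, rfl, h1⟩, h2, h3⟩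
      exact ⟨⟨(window_shift_iff_of_le (x := fun t => X t ω) ha hb rfl hmi).2 ⟨h1, h2, h3⟩,
        rfl⟩, rfl⟩
  rw [hset]
  cases j with
  | zero => simp
  | succ j =>
    simp only [add_left_inj]
    rw [measureReal_forall_mem_and_card_filter_eq hX hindep hident (by simp [ha, hb, hc]) E
      (Set.Ici_disjoint_Iio hmi), prod_insert (by simp [hbc, hab.symm]),
      prod_insert (by simp [hac.symm]), prod_singleton, cast_choose_eq_div_mul_choose_add_one,
      Nat.add_sub_add_right]
    simp only [E, hbc.symm, hab, hac, reduceIte]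
    push_cast
    ring

lemma measureReal_recentRecordEvent_shift_of_lt [IsFiniteMeasure P]
    (hX : ∀ a, Measurable (X a)) (hindep : iIndepFun X P)
    (hident : ∀ a, IdentDistrib (X a) (X 1) P P) (ha : a ∉ V) (hb : b ∉ V) (hc : c ∉ V)
    (hab : a ≠ b) (hac : a ≠ c) (hbc : b ≠ c) (j : ℕ) {i m : ℕ} (him : i < m) :
    P.real (recentRecordEvent X (insert a V) b j ∩ recentRecordEvent X (insert b V) c j ∩
        X b ⁻¹' {i} ∩ X c ⁻¹' {m}) =
      ((#V + 1 : ℝ) - j) / (#V + 1) * (#V + 1).choose j * (P.real (X 1 ⁻¹' {i}) *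
        P.real (X 1 ⁻¹' {m}) * P.real (X 1 ⁻¹' Set.Ici m) ^ j *
        P.real (X 1 ⁻¹' Set.Iio i) ^ (#V + 1 - j)) := by
  set E : ℕ → Set ℕ := fun s => if s = b then {i} else if s = c then {m} else Set.Iio i
  have hset : recentRecordEvent X (insert a V) b j ∩ recentRecordEvent X (insert b V) c j ∩
      X b ⁻¹' {i} ∩ X c ⁻¹' {m} =
      {ω | (∀ s ∈ ({b, c, a} : Finset ℕ), X s ω ∈ E s) ∧
        #(V.filter fun t => X t ω ∈ Set.Ici m) = j ∧
        ∀ t ∈ V, X t ω ∈ Set.Ici m ∪ Set.Iio i} := by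
    ext ω
    simp only [recentRecordEvent, E, Set.mem_inter_iff, Set.mem_ofPred_eq, Set.mem_preimage,
      Set.mem_singleton_iff, forall_mem_insert, Finset.mem_singleton, forall_eq, hbc.symm, hab,
      hac, reduceIte]
    constructor
    · rintro ⟨⟨⟨hcur, hnext⟩, rfl⟩, rfl⟩
      obtain ⟨h1, h2, h3⟩ :=
        (window_shift_iff_of_lt (x := fun t => X t ω) ha hb rfl him).1 ⟨hcur, hnext⟩
      exact ⟨⟨rfl, rfl, h1⟩, h2, h3⟩
    · rintro ⟨⟨rfl, rfl, h1⟩, h2, h3⟩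
      exact ⟨⟨(window_shift_iff_of_lt (x := fun t => X t ω) ha hb rfl him).2 ⟨h1, h2, h3⟩,
        rfl⟩, rfl⟩
  rw [hset, measureReal_forall_mem_and_card_filter_eq hX hindep hident (by simp [ha, hb, hc]) E
    (Set.Ici_disjoint_Iio him.le), prod_insert (by simp [hbc, hab.symm]),
    prod_insert (by simp [hac.symm]), prod_singleton]
  simp only [E, hbc.symm, hab, hac, reduceIte]
  linear_combination P.real (X 1 ⁻¹' {i}) * P.real (X 1 ⁻¹' {m}) * P.real (X 1 ⁻¹' Set.Ici m) ^ j *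
    cast_choose_mul_pow_mul_self (#V) j (P.real (X 1 ⁻¹' Set.Iio i))

lemma measureReal_shift_inter_preimage_eq_mul_transitionWeight [IsFiniteMeasure P]
    (hX : ∀ a, Measurable (X a)) (hindep : iIndepFun X P)
    (hident : ∀ a, IdentDistrib (X a) (X 1) P P) (ha : a ∉ V) (hb : b ∉ V) (hc : c ∉ V)
    (hab : a ≠ b) (hac : a ≠ c) (hbc : b ≠ c) {k : ℕ} (hk : #V + 1 = k) (j : ℕ)
    {p S C : ℕ → ℝ} (hp : ∀ l, p l = P.real (X 1 ⁻¹' {l}))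
    (hS : ∀ i, S i = P.real (X 1 ⁻¹' Set.Ici i)) (hC : ∀ i, C i = P.real (X 1 ⁻¹' Set.Iic i))
    (hp0 : p 0 = 0) (i m : ℕ) :
    P.real (recentRecordEvent X (insert a V) b j ∩ recentRecordEvent X (insert b V) c j ∩
        X b ⁻¹' {i} ∩ X c ⁻¹' {m}) =
      P.real (recentRecordEvent X (insert a V) b j ∩ X b ⁻¹' {i}) *
        transitionWeight p S C k j i m := by
  subst hk
  have hL : ∀ m, 1 ≤ m → C (m - 1) = P.real (X 1 ⁻¹' Set.Iio m) := fun m hm => by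
    rw [hC, Set.Iic_sub_one_eq_Iio_of_not_isMin (by simpa using Nat.one_le_iff_ne_zero.1 hm)]
  have hSanti : Antitone S := fun i m h => by
    simpa only [hS] using antitone_measureReal_preimage_Ici P (X 1) h
  rw [measureReal_recentRecordEvent_inter_preimage hX hindep hident ha hb hab]
  simp only [← hp, ← hS, transitionWeight]
  push_cast
  rcases lt_trichotomy m i with hmi | rfl | him
  · rw [measureReal_recentRecordEvent_shift_of_le hX hindep hident ha hb hc hab hac hbc j hmi.le]
    simp only [← hp, ← hS, if_neg hmi.ne, if_neg (not_lt.2 hmi.le)]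
    rcases Nat.eq_zero_or_pos m with rfl | hm
    · simp [hp0]
    · rw [if_pos (mem_Ico.2 ⟨hm, hmi⟩), hL m hm, hL i (by omega), ← pow_mul_div_pow_of_le
        measureReal_nonneg (monotone_measureReal_preimage_Iio P (X 1) hmi.le)]
      ring
  · rw [measureReal_recentRecordEvent_shift_of_le hX hindep hident ha hb hc hab hac hbc j le_rfl]
    simp only [← hp, ← hS, lt_irrefl, mem_Ico, and_false, reduceIte]
    ring
  · rw [measureReal_recentRecordEvent_shift_of_lt hX hindep hident ha hb hc hab hac hbc j him]
    simp only [← hp, ← hS, if_neg him.ne', if_pos him, mem_Ico, not_lt.2 him.le, and_false,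
      reduceIte, ← pow_mul_div_pow_of_le (hS m ▸ measureReal_nonneg) (hSanti him.le) j]
    ring

lemma measureReal_recentRecordEvent_shift_inter_preimage [IsFiniteMeasure P]
    (hX : ∀ a, Measurable (X a)) (hindep : iIndepFun X P)
    (hident : ∀ a, IdentDistrib (X a) (X 1) P P) (ha : a ∉ V) (hb : b ∉ V) (hc : c ∉ V)
    (hab : a ≠ b) (hac : a ≠ c) (hbc : b ≠ c) {k : ℕ} (hk : #V + 1 = k) (j : ℕ)
    {p S C : ℕ → ℝ} (hp : ∀ l, p l = P.real (X 1 ⁻¹' {l}))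
    (hS : ∀ i, S i = P.real (X 1 ⁻¹' Set.Ici i)) (hC : ∀ i, C i = P.real (X 1 ⁻¹' Set.Iic i))
    (hp0 : p 0 = 0) (i : ℕ) :
    P.real (recentRecordEvent X (insert a V) b j ∩ recentRecordEvent X (insert b V) c j ∩
        X b ⁻¹' {i}) =
      P.real (recentRecordEvent X (insert a V) b j ∩ X b ⁻¹' {i}) * (j / k * p i +
        (∑' m, if i < m then p m * (S m / S i) ^ j * ((k - j) / k) else 0) +
        ∑ m ∈ Ico 1 i, p m * (C (m - 1) / C (i - 1)) ^ (k - j) * (j / k)) := by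
  have hp_summable : Summable p := by
    simpa [← hp] using
      (hasSum_measureReal_inter_preimage_singleton (μ := P) (hX 1) MeasurableSet.univ).summable
  have hsum := summable_ite_lt_mul_div_pow hp_summable (fun m => hp m ▸ measureReal_nonneg)
    (fun m => hS m ▸ measureReal_nonneg)
    (fun i m h => by simpa only [hS] using antitone_measureReal_preimage_Ici P (X 1) h) i j
    (((k : ℝ) - j) / k)
  have htotal := hasSum_measureReal_inter_preimage_singleton (μ := P) (hX c)
    (((measurableSet_recentRecordEvent hX (insert a V) b j).inter
      (measurableSet_recentRecordEvent hX (insert b V) c j)).inter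
      (hX b (measurableSet_singleton i)))
  simp_rw [measureReal_shift_inter_preimage_eq_mul_transitionWeight hX hindep hident ha hb hc hab
    hac hbc hk j hp hS hC hp0] at htotal
  exact htotal.unique ((hasSum_transitionWeight p S C k j i hsum).mul_left _)

end IID

theorem recent_k_record_prediction_rule_general
    {Ω : Type*} [MeasurableSpace Ω] (P : Measure Ω) [IsProbabilityMeasure P]
    (X : ℕ → Ω → ℕ) (hXmeas : ∀ a, Measurable (X a))
    (hXpos : ∀ a ω, 1 ≤ X a ω)
    (hindep : iIndepFun X P)
    (hident : ∀ a, IdentDistrib (X a) (X 1) P P)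
    (k j : ℕ) (hk : 1 ≤ k)
    (p S C : ℕ → ℝ)
    (hp : ∀ l, p l = (P {ω | X 1 ω = l}).toReal)
    (hS : ∀ i, S i = (P {ω | i ≤ X 1 ω}).toReal)
    (hC : ∀ i, C i = (P {ω | X 1 ω ≤ i}).toReal)
    (n : ℕ) (hn : k + 1 ≤ n)
    (B : Set Ω)
    (hB : B = {ω | ((Finset.Icc (n - k) (n - 1)).filter fun t => X n ω ≤ X t ω).card = j})
    (q : ℕ → ℝ) (hq : ∀ i, q i = ((P[|B]) {ω | X n ω = i}).toReal) :
    ((P[|B]) {ω |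
        ((Finset.Icc (n + 1 - k) n).filter fun t => X (n + 1) ω ≤ X t ω).card = j}).toReal
      = ∑' i : ℕ, if 1 ≤ i then
          q i * (((j : ℝ) / k) * p i
            + (∑' m : ℕ, if i < m then p m * (S m / S i) ^ j * (((k : ℝ) - j) / k) else 0)
            + ∑ m ∈ Finset.Ico 1 i, p m * (C (m - 1) / C (i - 1)) ^ (k - j) * ((j : ℝ) / k))
        else 0 := by
  set V := Icc (n - k + 1) (n - 1)
  have hcur : Icc (n - k) (n - 1) = insert (n - k) V := by ext t; simp [V]; omega
  have hnext : Icc (n + 1 - k) n = insert n V := by ext t; simp [V]; omega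
  have hV : #V + 1 = k := by simp [V]; omega
  have hV' : n - k ∉ V ∧ n ∉ V ∧ n + 1 ∉ V := by simp [V]; omega
  have hzero : ∀ a, {ω | X a ω = 0} = ∅ := fun a =>
    Set.eq_empty_of_forall_notMem fun ω (h : X a ω = 0) => by have := hXpos a ω; omega
  have hp0 : p 0 = 0 := by rw [hp, hzero]; simp
  rw [hcur] at hB
  change B = recentRecordEvent X _ n j at hB
  subst hB
  rw [hnext]
  change ((P[|_]) (recentRecordEvent X (insert n V) (n + 1) j)).toReal = _
  have hBm := measurableSet_recentRecordEvent hXmeas (insert (n - k) V) n j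
  rw [toReal_cond_apply hBm, ← (hasSum_measureReal_inter_preimage_singleton (hXmeas n)
    (hBm.inter (measurableSet_recentRecordEvent hXmeas _ _ j))).tsum_eq, ← tsum_mul_left]
  refine tsum_congr fun i => ?_
  rw [measureReal_recentRecordEvent_shift_inter_preimage hXmeas hindep hident hV'.1 hV'.2.1
    hV'.2.2 (by omega) (by omega) (by omega) hV j hp hS hC hp0 i, hq, toReal_cond_apply hBm]
  split_ifs with hi
  · exact (mul_assoc ..).symm
  · obtain rfl : i = 0 := by omega
    rw [show X n ⁻¹' {0} = ∅ from hzero n]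
    simp

/-- Prediction rule: with `q_i = P(Xₙ = i | Xₙ ∈ R_j^k)`,
`P(X_{n+1} ∈ R_j^k | Xₙ ∈ R_j^k) = ∑_{i≥1} q_i [ (j/k) pᵢ
  + ∑_{m>i} p_m (S_m/S_i)^j ((k-j)/k) + ∑_{m<i} p_m (C_{m-1}/C_{i-1})^{k-j} (j/k) ]`. -/
theorem recent_k_record_prediction_rule
    {Ω : Type*} [MeasurableSpace Ω] (P : Measure Ω) [IsProbabilityMeasure P]
    (X : ℕ → Ω → ℕ) (hXmeas : ∀ a, Measurable (X a))
    (hXpos : ∀ a ω, 1 ≤ X a ω)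
    (hindep : iIndepFun X P)
    (hident : ∀ a, IdentDistrib (X a) (X 1) P P)
    (k j : ℕ) (hk : 1 ≤ k) (hj : j ≤ k)
    (p S C : ℕ → ℝ)
    (hp : ∀ l, p l = (P {ω | X 1 ω = l}).toReal)
    (hS : ∀ i, S i = (P {ω | i ≤ X 1 ω}).toReal)
    (hC : ∀ i, C i = (P {ω | X 1 ω ≤ i}).toReal)
    (n : ℕ) (hn : k + 1 ≤ n)
    (B : Set Ω)
    (hB : B = {ω | ((Finset.Icc (n - k) (n - 1)).filter fun t => X n ω ≤ X t ω).card = j})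
    (hBpos : 0 < P B)
    (q : ℕ → ℝ) (hq : ∀ i, q i = ((P[|B]) {ω | X n ω = i}).toReal) :
    ((P[|B]) {ω |
        ((Finset.Icc (n + 1 - k) n).filter fun t => X (n + 1) ω ≤ X t ω).card = j}).toReal
      = ∑' i : ℕ, if 1 ≤ i then
          q i * (((j : ℝ) / k) * p i
            + (∑' m : ℕ, if i < m then p m * (S m / S i) ^ j * (((k : ℝ) - j) / k) else 0)
            + ∑ m ∈ Finset.Ico 1 i, p m * (C (m - 1) / C (i - 1)) ^ (k - j) * ((j : ℝ) / k))
        else 0 :=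
  recent_k_record_prediction_rule_general P X hXmeas hXpos hindep hident k j hk p S C hp hS hC n hn
    B hB q hq
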